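/- arXiv:2209.12832 — 5 statements merged into one kernel-verified Lean document; each statement's English description precedes it below -/
import Mathlib

section
/- Let c : ℕ → ℂ be a sequence with c(0) = c(1) = 0 such that Σ_{n≥2} |c(n)| n^{−σ} < ∞ for every real σ > 1. Then for every complex number z with Im z > 1/2, setting s = 1/2 − iz, one has ∫₀^∞ ( Σ_{2 ≤ n ≤ e^t} (c(n)/√n)(t − log n) ) e^{izt} dt = −(1/z²) Σ_{n≥2} c(n) n^{−s}. -/
/-!
With `a n = c n / √n` and `w = i z` (so `Re w = -Im z < 0`), the integrand is
`∑ₙ a n (t - log n)⁺ e^{wt}`. Each ramp term has Laplace transform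
`∫_{log n}^∞ (t - log n) e^{wt} dt = e^{w log n} / w²`, and the norms of these transforms,
`|c n| n^{-(Im z + 1/2)} / (Im z)²`, are summable because `Im z + 1/2 > 1`. Hence integral and
sum may be interchanged, and `e^{iz log n} / (√n (iz)²) = -n^{-s} / z²`.
-/

open MeasureTheory Set Complex

section Ramp

/-- The ramp `(t - L)⁺ e^{wt}`. -/
noncomputable def rampCexp (w : ℂ) (L : ℝ) : ℝ → ℂ :=
  (Ioi L).indicator fun t => ((t : ℂ) - L) * cexp (w * t)

variable {w : ℂ} {L : ℝ}

lemma rampCexp_of_le {t : ℝ} (h : L ≤ t) : rampCexp w L t = ((t : ℂ) - L) * cexp (w * t) := by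
  rcases h.eq_or_lt with rfl | h
  · simp [rampCexp]
  · exact indicator_of_mem h _

lemma rampCexp_of_ge {t : ℝ} (h : t ≤ L) : rampCexp w L t = 0 :=
  indicator_of_notMem (notMem_Ioi.mpr h) _

lemma integrableOn_Ioi_sub_mul_cexp (hw : w.re < 0) (hL : 0 ≤ L) :
    IntegrableOn (fun t : ℝ => ((t : ℂ) - L) * cexp (w * t)) (Ioi L) := by
  have hdom : IntegrableOn (fun t : ℝ => t * Real.exp (w.re * t)) (Ioi 0) := by
    simpa using integrableOn_rpow_mul_exp_neg_mul_rpow (s := 1) (p := 1) (b := -w.re)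
      (by norm_num) one_pos (by linarith)
  refine (hdom.mono_set (Ioi_subset_Ioi hL)).mono' (by fun_prop) ?_
  filter_upwards [ae_restrict_mem measurableSet_Ioi] with t (ht : L < t)
  rw [norm_mul, norm_exp, ← ofReal_sub, norm_real, re_mul_ofReal, Real.norm_of_nonneg (by linarith)]
  gcongr
  linarith

lemma integral_Ioi_sub_mul_cexp (hw : w.re < 0) (hL : 0 ≤ L) :
    ∫ t in Ioi L, ((t : ℂ) - L) * cexp (w * t) = cexp (w * L) / w ^ 2 := by
  have hw0 : w ≠ 0 := by rintro rfl; simp at hw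
  set F : ℝ → ℂ := fun t => cexp (w * t) * (((t : ℂ) - L) / w - 1 / w ^ 2)
  have hF (t : ℝ) : HasDerivAt F (((t : ℂ) - L) * cexp (w * t)) t := by
    have hG : HasDerivAt (fun ζ : ℂ => cexp (w * ζ) * ((ζ - L) / w - 1 / w ^ 2))
        (((t : ℂ) - L) * cexp (w * t)) t := by
      refine (((hasDerivAt_id (t : ℂ)).const_mul w).cexp.mul
        ((((hasDerivAt_id (t : ℂ)).sub_const (L : ℂ)).div_const w).sub_const _)).congr_deriv ?_
      simp only [id]
      field_simp
      ring
    exact hG.comp_ofReal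
  have hint := integrableOn_Ioi_sub_mul_cexp hw hL
  -- `F` is integrable as well, which forces `F → 0` at infinity.
  have hFint : IntegrableOn F (Ioi L) := by
    have hF_eq : F = fun t : ℝ => w⁻¹ * (((t : ℂ) - L) * cexp (w * t)) - (w ^ 2)⁻¹ * cexp (w * t) := by
      funext t
      simp only [F]
      ring
    rw [hF_eq]
    exact (hint.const_mul _).sub ((integrableOn_exp_mul_complex_Ioi hw L).const_mul _)
  rw [integral_Ioi_of_hasDerivAt_of_tendsto' (fun t _ => hF t) hint
    (tendsto_zero_of_hasDerivAt_of_integrableOn_Ioi (fun t _ => hF t) hint hFint)]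
  simp only [F, sub_self, zero_div]
  ring

lemma integrableOn_rampCexp (hw : w.re < 0) (hL : 0 ≤ L) : IntegrableOn (rampCexp w L) (Ioi 0) := by
  rw [IntegrableOn, rampCexp, integrable_indicator_iff measurableSet_Ioi, IntegrableOn,
    Measure.restrict_restrict measurableSet_Ioi, inter_eq_left.mpr (Ioi_subset_Ioi hL)]
  exact integrableOn_Ioi_sub_mul_cexp hw hL

lemma integral_rampCexp (hw : w.re < 0) (hL : 0 ≤ L) :
    ∫ t in Ioi 0, rampCexp w L t = cexp (w * L) / w ^ 2 := by
  rw [rampCexp, integral_indicator measurableSet_Ioi, Measure.restrict_restrict measurableSet_Ioi,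
    inter_eq_left.mpr (Ioi_subset_Ioi hL), integral_Ioi_sub_mul_cexp hw hL]

lemma ofReal_norm_rampCexp (t : ℝ) : (‖rampCexp w L t‖ : ℂ) = rampCexp w.re L t := by
  rcases le_total t L with h | h
  · simp [rampCexp_of_ge h]
  · rw [rampCexp_of_le h, rampCexp_of_le h, norm_mul, norm_exp, ← ofReal_sub, norm_real,
      re_mul_ofReal, Real.norm_of_nonneg (by linarith)]
    push_cast
    ring_nf

lemma integral_norm_rampCexp (hw : w.re < 0) (hL : 0 ≤ L) :
    ∫ t in Ioi 0, ‖rampCexp w L t‖ = Real.exp (w.re * L) / w.re ^ 2 := by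
  apply ofReal_injective
  rw [← integral_complex_ofReal]
  simp_rw [ofReal_norm_rampCexp]
  rw [integral_rampCexp (by simpa using hw) hL]
  push_cast
  rfl

theorem integral_tsum_mul_rampCexp {ι : Type*} [Countable ι] {a : ι → ℂ} {ℓ : ι → ℝ}
    (hℓ : ∀ i, 0 ≤ ℓ i) (hw : w.re < 0) (ha : Summable fun i => ‖a i * cexp (w * ℓ i)‖) :
    ∫ t in Ioi 0, ∑' i, a i * rampCexp w (ℓ i) t = (∑' i, a i * cexp (w * ℓ i)) / w ^ 2 := by
  rw [← integral_tsum_of_summable_integral_norm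
    (fun i => (integrableOn_rampCexp hw (hℓ i)).const_mul (a i))]
  · simp_rw [integral_const_mul, integral_rampCexp hw (hℓ _), ← mul_div_assoc, tsum_div_const]
  · simp_rw [norm_mul, integral_const_mul, integral_norm_rampCexp hw (hℓ _), ← mul_div_assoc]
    simpa only [norm_mul, norm_exp, re_mul_ofReal] using ha.div_const _

end Ramp

lemma sum_Icc_floor_exp_mul_cexp_eq_tsum_rampCexp {a : ℕ → ℂ} (ha0 : a 0 = 0) (ha1 : a 1 = 0)
    (w : ℂ) (t : ℝ) :
    (∑ n ∈ Finset.Icc 2 ⌊Real.exp t⌋₊, a n * ((t : ℂ) - Real.log n)) * cexp (w * t) =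
      ∑' n : ℕ, a n * rampCexp w (Real.log n) t := by
  have hlog {n : ℕ} (hn : n ≠ 0) : n ≤ ⌊Real.exp t⌋₊ ↔ Real.log n ≤ t := by
    rw [Nat.le_floor_iff (Real.exp_nonneg t), Real.log_le_iff_le_exp (by positivity)]
  rw [Finset.sum_mul, tsum_eq_sum (s := Finset.Icc 2 ⌊Real.exp t⌋₊)]
  · refine Finset.sum_congr rfl fun n hn => ?_
    obtain ⟨h2n, hnt⟩ := Finset.mem_Icc.mp hn
    rw [rampCexp_of_le ((hlog (by omega)).mp hnt), mul_assoc]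
  · intro n hn
    rcases Nat.lt_or_ge n 2 with h | h
    · interval_cases n <;> simp [ha0, ha1]
    · have hnt : ¬ n ≤ ⌊Real.exp t⌋₊ := fun hnt => hn (Finset.mem_Icc.mpr ⟨h, hnt⟩)
      rw [hlog (by omega), not_le] at hnt
      rw [rampCexp_of_ge hnt.le, mul_zero]

lemma div_sqrt_mul_cexp_mul_log {n : ℕ} (hn : n ≠ 0) (x w : ℂ) :
    x / (Real.sqrt n : ℂ) * cexp (w * Real.log n) = x * cexp (-(1 / 2 - w) * Real.log n) := by
  have hsqrt : (Real.sqrt n : ℂ) = cexp (Real.log n / 2) := by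
    rw [Real.sqrt_eq_rpow, Real.rpow_def_of_pos (by positivity)]
    push_cast
    ring_nf
  rw [hsqrt, div_mul_eq_mul_div, mul_div_assoc, ← exp_sub]
  ring_nf

lemma norm_mul_cexp_neg_mul_log {n : ℕ} (hn : n ≠ 0) (x s : ℂ) :
    ‖x * cexp (-s * Real.log n)‖ = ‖x‖ / (n : ℝ) ^ s.re := by
  rw [norm_mul, norm_exp, re_mul_ofReal, Real.rpow_def_of_pos (by positivity), neg_re,
    div_eq_mul_inv, ← Real.exp_neg]
  ring_nf

/-- For `c : ℕ → ℂ` with `c 0 = c 1 = 0` and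
`Σ_{n≥2} |c(n)| n^{−σ} < ∞` for every real `σ > 1`, and every `z` with `Im z > 1/2`,
setting `s = 1/2 − iz`,
`∫₀^∞ ( Σ_{2 ≤ n ≤ e^t} (c(n)/√n)(t − log n) ) e^{izt} dt = −(1/z²) Σ_{n≥2} c(n) n^{−s}`,
where `n^{−s} = exp(−s log n)`. -/
theorem integral_dirichlet_sum (c : ℕ → ℂ) (hc0 : c 0 = 0) (hc1 : c 1 = 0)
    (hc : ∀ σ : ℝ, 1 < σ → Summable fun n : ℕ => ‖c n‖ / (n : ℝ) ^ σ)
    (z : ℂ) (hz : 1 / 2 < z.im) (s : ℂ) (hs : s = 1 / 2 - Complex.I * z) :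
    (∫ t in Set.Ioi (0 : ℝ),
        (∑ n ∈ Finset.Icc 2 ⌊Real.exp t⌋₊,
            (c n / (Real.sqrt n : ℂ)) * ((t : ℂ) - Real.log n)) *
          Complex.exp (Complex.I * z * t))
      = -(1 / z ^ 2) * ∑' n : ℕ, c n * Complex.exp (-s * Real.log n) := by
  subst hs
  have hw : (I * z).re < 0 := by rw [I_mul_re]; linarith
  have hterm (n : ℕ) : c n / (Real.sqrt n : ℂ) * cexp (I * z * Real.log n) =
      c n * cexp (-(1 / 2 - I * z) * Real.log n) := by
    rcases eq_or_ne n 0 with rfl | hn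
    · simp [hc0]
    · exact div_sqrt_mul_cexp_mul_log hn _ _
  have hsum : Summable fun n : ℕ => ‖c n * cexp (-(1 / 2 - I * z) * Real.log n)‖ := by
    refine (hc (z.im + 1 / 2) (by linarith)).congr fun n => ?_
    rcases eq_or_ne n 0 with rfl | hn
    · simp [hc0]
    · rw [norm_mul_cexp_neg_mul_log hn, sub_re, I_mul_re]
      norm_num [add_comm]
  calc _ = ∫ t in Ioi 0, ∑' n : ℕ, c n / (Real.sqrt n : ℂ) * rampCexp (I * z) (Real.log n) t := by
        simp_rw [sum_Icc_floor_exp_mul_cexp_eq_tsum_rampCexp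
          (a := fun n => c n / (Real.sqrt n : ℂ)) (by simp) (by simp [hc1])]
    _ = (∑' n : ℕ, c n / (Real.sqrt n : ℂ) * cexp (I * z * Real.log n)) / (I * z) ^ 2 :=
        integral_tsum_mul_rampCexp (fun n => Real.log_natCast_nonneg n) hw (by simpa only [hterm])
    _ = _ := by
        simp_rw [hterm, mul_pow, I_sq]
        ring
end

section
/- For every complex number z with Im z > θ, one has ∫₀^∞ g(t) e^{izt} dt = (1/z²) [ iB + i m₀/z + i Σₖ (1/(z − γₖ) + 1/γₖ) ], where the series on the right-hand side converges absolutely. -/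
/-!
Expanding `g(t) e^{izt}` termwise, everything reduces to the transforms
`∫₀^∞ tⁿ e^{iwt} dt = n! (i/w)^{n+1}` (`Im w > 0`), obtained by integrating by parts. The `k`-th
term of the series contributes `(i/(z - γₖ) - i/z)/γₖ² = (i/z²)(1/(z - γₖ) + 1/γₖ)`. For `t ≥ 0`
that term is bounded by `(e^{-(Im z - θ)t} + e^{-(Im z)t}) / |γₖ|²`, an integrable function times a
summable sequence, so dominated convergence lets the series be integrated termwise. The series on
the right converges absolutely because `|z - γₖ| ≥ Im z - θ > 0` forces `|z - γₖ| ≳ |γₖ|`.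
-/

open MeasureTheory Set Filter Topology Complex

namespace Complex

variable {a : ℂ}

lemma norm_pow_mul_cexp_mul_ofReal {t : ℝ} (ht : 0 ≤ t) (n : ℕ) :
    ‖(t : ℂ) ^ n * cexp (a * t)‖ = t ^ (n : ℝ) * Real.exp (a.re * t) := by
  simp [norm_exp, abs_of_nonneg ht]

lemma integrableOn_pow_mul_cexp_mul_Ioi (n : ℕ) (ha : a.re < 0) :
    IntegrableOn (fun t : ℝ => (t : ℂ) ^ n * cexp (a * t)) (Ioi 0) := by
  have hdom := integrableOn_rpow_mul_exp_neg_mul_rpow (s := n) (p := 1) (b := -a.re)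
    (by linarith [n.cast_nonneg (α := ℝ)]) one_pos (by linarith)
  refine hdom.mono' (by fun_prop) ?_
  filter_upwards [ae_restrict_mem measurableSet_Ioi] with t ht
  rw [norm_pow_mul_cexp_mul_ofReal ht.le, Real.rpow_one, neg_neg]

lemma tendsto_pow_mul_cexp_mul_atTop (n : ℕ) (ha : a.re < 0) :
    Tendsto (fun t : ℝ => (t : ℂ) ^ n * cexp (a * t)) atTop (𝓝 0) := by
  refine squeeze_zero_norm' ?_
    (tendsto_rpow_mul_exp_neg_mul_atTop_nhds_zero n (-a.re) (by linarith))
  filter_upwards [eventually_ge_atTop 0] with t ht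
  rw [norm_pow_mul_cexp_mul_ofReal ht, neg_neg]

lemma integral_pow_succ_mul_cexp_mul_Ioi (n : ℕ) (ha : a.re < 0) :
    ∫ t in Ioi (0 : ℝ), (t : ℂ) ^ (n + 1) * cexp (a * t)
      = (n + 1) / -a * ∫ t in Ioi (0 : ℝ), (t : ℂ) ^ n * cexp (a * t) := by
  have ha0 : a ≠ 0 := fun h => by simp [h] at ha
  have hu : ∀ t : ℝ, HasDerivAt (fun t : ℝ => (t : ℂ) ^ (n + 1)) ((n + 1) * (t : ℂ) ^ n) t := by
    intro t
    simpa using (hasDerivAt_pow (n + 1) (t : ℂ)).comp_ofReal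
  have hv : ∀ t : ℝ, HasDerivAt (fun t : ℝ => cexp (a * t) / a) (cexp (a * t)) t := by
    intro t
    have := ((hasDerivAt_id (t : ℂ)).const_mul a).cexp.comp_ofReal.div_const a
    simpa [ha0] using this
  rw [integral_Ioi_mul_deriv_eq_deriv_mul (fun t _ => hu t) (fun t _ => hv t)
    (integrableOn_pow_mul_cexp_mul_Ioi (n + 1) ha) ?_ ?_ ?_ (a' := 0) (b' := 0)]
  · rw [sub_self, zero_sub, ← integral_const_mul, ← integral_neg]
    congr 1 with t
    field_simp
  · have := ((integrableOn_pow_mul_cexp_mul_Ioi n ha).const_mul ((n + 1 : ℂ))).div_const a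
    simpa [IntegrableOn, Pi.mul_def, mul_div_assoc, mul_assoc] using this
  · have hcont : Continuous fun t : ℝ => (t : ℂ) ^ (n + 1) * (cexp (a * t) / a) := by fun_prop
    simpa [Pi.mul_def] using (hcont.tendsto 0).mono_left nhdsWithin_le_nhds
  · simpa [Pi.mul_def, mul_div_assoc] using (tendsto_pow_mul_cexp_mul_atTop (n + 1) ha).div_const a

lemma integral_pow_mul_cexp_mul_Ioi (n : ℕ) (ha : a.re < 0) :
    ∫ t in Ioi (0 : ℝ), (t : ℂ) ^ n * cexp (a * t) = n.factorial / (-a) ^ (n + 1) := by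
  induction n with
  | zero => simpa [neg_div, div_neg] using integral_exp_mul_complex_Ioi ha 0
  | succ n ih =>
    rw [integral_pow_succ_mul_cexp_mul_Ioi n ha, ih, Nat.factorial_succ]
    push_cast
    ring

lemma norm_cexp_I_mul_mul_ofReal (w : ℂ) (t : ℝ) : ‖cexp (I * w * t)‖ = Real.exp (-w.im * t) := by
  simp [norm_exp]

lemma cexp_neg_I_mul_mul_cexp_I_mul (γ z : ℂ) (t : ℝ) :
    cexp (-I * γ * t) * cexp (I * z * t) = cexp (I * (z - γ) * t) := by
  rw [← Complex.exp_add]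
  ring_nf

lemma integrableOn_pow_mul_cexp_I_mul_Ioi (n : ℕ) {w : ℂ} (hw : 0 < w.im) :
    IntegrableOn (fun t : ℝ => (t : ℂ) ^ n * cexp (I * w * t)) (Ioi 0) :=
  integrableOn_pow_mul_cexp_mul_Ioi n (by simpa using hw)

lemma integral_pow_mul_cexp_I_mul_Ioi (n : ℕ) {w : ℂ} (hw : 0 < w.im) :
    ∫ t in Ioi (0 : ℝ), (t : ℂ) ^ n * cexp (I * w * t) = n.factorial * (I / w) ^ (n + 1) := by
  have hw0 : w ≠ 0 := fun h => by simp [h] at hw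
  rw [integral_pow_mul_cexp_mul_Ioi n (by simpa using hw), div_eq_mul_one_div, ← one_div_pow]
  congr 2
  field_simp
  ring_nf
  simp

lemma mul_add_mul_sq_mul_cexp_I_mul_eq (p q w : ℂ) (t : ℝ) :
    (p * t + q * (t : ℂ) ^ 2) * cexp (I * w * t)
      = p * ((t : ℂ) ^ 1 * cexp (I * w * t)) + q * ((t : ℂ) ^ 2 * cexp (I * w * t)) := by
  ring

lemma integrableOn_mul_add_mul_sq_mul_cexp_I_mul_Ioi (p q : ℂ) {w : ℂ} (hw : 0 < w.im) :
    IntegrableOn (fun t : ℝ => (p * t + q * (t : ℂ) ^ 2) * cexp (I * w * t)) (Ioi 0) := by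
  simp_rw [mul_add_mul_sq_mul_cexp_I_mul_eq]
  exact ((integrableOn_pow_mul_cexp_I_mul_Ioi 1 hw).const_mul p).add
    ((integrableOn_pow_mul_cexp_I_mul_Ioi 2 hw).const_mul q)

lemma integral_mul_add_mul_sq_mul_cexp_I_mul_Ioi (p q : ℂ) {w : ℂ} (hw : 0 < w.im) :
    ∫ t in Ioi (0 : ℝ), (p * t + q * (t : ℂ) ^ 2) * cexp (I * w * t)
      = -p / w ^ 2 - 2 * I * q / w ^ 3 := by
  simp_rw [mul_add_mul_sq_mul_cexp_I_mul_eq]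
  rw [integral_add ((integrableOn_pow_mul_cexp_I_mul_Ioi 1 hw).const_mul p)
      ((integrableOn_pow_mul_cexp_I_mul_Ioi 2 hw).const_mul q),
    integral_const_mul, integral_const_mul, integral_pow_mul_cexp_I_mul_Ioi 1 hw,
    integral_pow_mul_cexp_I_mul_Ioi 2 hw]
  simp only [Nat.factorial, Nat.cast_one, Nat.mul_one]
  linear_combination (p / w ^ 2 + 2 * q * I / w ^ 3) * I_sq

end Complex

namespace MeasureTheory

variable {α ι E : Type*} [MeasurableSpace α] {μ : Measure α} [Countable ι]
  [NormedAddCommGroup E] [CompleteSpace E]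
  {F : ι → α → E} {c : ι → ℝ} {b : α → ℝ}

lemma ae_hasSum_of_norm_le_mul (hc : Summable c) (hFb : ∀ k, ∀ᵐ x ∂μ, ‖F k x‖ ≤ c k * b x) :
    ∀ᵐ x ∂μ, HasSum (fun k => F k x) (∑' k, F k x) := by
  filter_upwards [ae_all_iff.2 hFb] with x hx
  exact (Summable.of_norm_bounded (hc.mul_right (b x)) hx).hasSum

lemma integrable_tsum_of_norm_le_mul (hF : ∀ k, AEStronglyMeasurable (F k) μ) (hc : Summable c)
    (hb : Integrable b μ) (hFb : ∀ k, ∀ᵐ x ∂μ, ‖F k x‖ ≤ c k * b x) :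
    Integrable (fun x => ∑' k, F k x) μ := by
  have hmeas : AEStronglyMeasurable (fun x => ∑' k, F k x) μ :=
    aestronglyMeasurable_of_tendsto_ae atTop
      (fun s => Finset.aestronglyMeasurable_fun_sum s fun k _ => hF k)
      (ae_hasSum_of_norm_le_mul hc hFb)
  refine (hb.const_mul (∑' k, c k)).mono' hmeas ?_
  filter_upwards [ae_all_iff.2 hFb] with x hx
  rw [← tsum_mul_right]
  exact tsum_of_norm_bounded ((hc.mul_right (b x)).hasSum) hx

variable [NormedSpace ℝ E]

lemma hasSum_integral_of_norm_le_mul (hF : ∀ k, AEStronglyMeasurable (F k) μ) (hc : Summable c)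
    (hb : Integrable b μ) (hFb : ∀ k, ∀ᵐ x ∂μ, ‖F k x‖ ≤ c k * b x) :
    HasSum (fun k => ∫ x, F k x ∂μ) (∫ x, ∑' k, F k x ∂μ) := by
  refine hasSum_integral_of_dominated_convergence (fun k x => c k * b x) hF hFb
    (ae_of_all _ fun x => hc.mul_right (b x)) ?_ (ae_hasSum_of_norm_le_mul hc hFb)
  simpa only [tsum_mul_right] using hb.const_mul (∑' k, c k)

end MeasureTheory

lemma norm_one_div_sub_add_one_div_le {z γ : ℂ} {δ : ℝ} (hδ : 0 < δ) (hzγ : δ ≤ ‖z - γ‖)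
    (hγ : γ ≠ 0) : ‖1 / (z - γ) + 1 / γ‖ ≤ ‖z‖ * (δ + ‖z‖) / δ * (1 / ‖γ‖ ^ 2) := by
  have hzγ0 : z - γ ≠ 0 := norm_pos_iff.1 (hδ.trans_le hzγ)
  have hγpos : 0 < ‖γ‖ := norm_pos_iff.2 hγ
  have hfar : δ * ‖γ‖ ≤ (δ + ‖z‖) * ‖z - γ‖ := by
    have : ‖γ‖ - ‖z‖ ≤ ‖z - γ‖ := by simpa [norm_sub_rev] using norm_sub_norm_le γ z
    nlinarith [norm_nonneg z]
  have hsum : 1 / (z - γ) + 1 / γ = z / ((z - γ) * γ) := by field_simp; ring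
  rw [hsum, norm_div, norm_mul, div_mul_div_comm, mul_one,
    div_le_div_iff₀ (by positivity) (by positivity)]
  have := mul_le_mul_of_nonneg_left hfar (by positivity : 0 ≤ ‖z‖ * ‖γ‖)
  nlinarith [norm_nonneg z]

lemma summable_norm_one_div_sub_add_one_div {ι : Type*} {z : ℂ} {γ : ι → ℂ} {δ : ℝ}
    (hδ : 0 < δ) (hzγ : ∀ k, δ ≤ ‖z - γ k‖) (hγ : ∀ k, γ k ≠ 0)
    (hsum : Summable fun k => 1 / ‖γ k‖ ^ 2) :
    Summable fun k => ‖1 / (z - γ k) + 1 / γ k‖ :=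
  (hsum.mul_left _).of_nonneg_of_le (fun _ => norm_nonneg _) fun k =>
    norm_one_div_sub_add_one_div_le hδ (hzγ k) (hγ k)

lemma norm_screw_term_le {z γ : ℂ} {θ t : ℝ} (hγ : γ.im ≤ θ) (ht : 0 ≤ t) :
    ‖(cexp (-I * γ * t) - 1) / γ ^ 2 * cexp (I * z * t)‖
      ≤ 1 / ‖γ‖ ^ 2 * (Real.exp (-(z.im - θ) * t) + Real.exp (-z.im * t)) := by
  rw [div_mul_eq_mul_div, sub_mul, one_mul, cexp_neg_I_mul_mul_cexp_I_mul, norm_div, norm_pow,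
    one_div_mul_eq_div]
  gcongr
  refine (norm_sub_le _ _).trans ?_
  rw [norm_cexp_I_mul_mul_ofReal, norm_cexp_I_mul_mul_ofReal, sub_im]
  gcongr

lemma integral_screw_term {z γ : ℂ} (hγ : γ ≠ 0) (hz : 0 < z.im) (hzγ : 0 < (z - γ).im) :
    ∫ t in Ioi (0 : ℝ), (cexp (-I * γ * t) - 1) / γ ^ 2 * cexp (I * z * t)
      = I / z ^ 2 * (1 / (z - γ) + 1 / γ) := by
  have hz0 : z ≠ 0 := fun h => by simp [h] at hz
  have hzγ0 : z - γ ≠ 0 := fun h => by simp [h] at hzγ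
  have h0 := integral_pow_mul_cexp_I_mul_Ioi 0 hz
  have h0' := integral_pow_mul_cexp_I_mul_Ioi 0 hzγ
  have i0 := integrableOn_pow_mul_cexp_I_mul_Ioi 0 hz
  have i0' := integrableOn_pow_mul_cexp_I_mul_Ioi 0 hzγ
  simp only [pow_zero, one_mul, Nat.factorial_zero, Nat.cast_one, zero_add, pow_one]
    at h0 h0' i0 i0'
  simp_rw [div_mul_eq_mul_div, sub_mul, one_mul, cexp_neg_I_mul_mul_cexp_I_mul]
  rw [integral_div, integral_sub i0' i0, h0, h0']
  field_simp
  ring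

lemma integrableOn_screw_bound {θ : ℝ} {z : ℂ} (hθ : 0 ≤ θ) (hz : θ < z.im) :
    IntegrableOn (fun t : ℝ => Real.exp (-(z.im - θ) * t) + Real.exp (-z.im * t)) (Ioi 0) :=
  (exp_neg_integrableOn_Ioi 0 (sub_pos.2 hz)).add (exp_neg_integrableOn_Ioi 0 (hθ.trans_lt hz))

section ScrewSeries

variable {ι : Type*} {γ : ι → ℂ} {θ : ℝ} {z : ℂ}

lemma ae_norm_screw_term_le (hγθ : ∀ k, (γ k).im ≤ θ) (k : ι) :
    ∀ᵐ t : ℝ ∂volume.restrict (Ioi 0),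
      ‖(cexp (-I * γ k * t) - 1) / γ k ^ 2 * cexp (I * z * t)‖
        ≤ 1 / ‖γ k‖ ^ 2 * (Real.exp (-(z.im - θ) * t) + Real.exp (-z.im * t)) := by
  filter_upwards [ae_restrict_mem measurableSet_Ioi] with t ht
  exact norm_screw_term_le (hγθ k) ht.le

variable [Countable ι]

lemma integrableOn_tsum_screw_term (hθ : 0 ≤ θ) (hz : θ < z.im) (hγθ : ∀ k, (γ k).im ≤ θ)
    (hsum : Summable fun k => 1 / ‖γ k‖ ^ 2) :
    IntegrableOn (fun t : ℝ => ∑' k, (cexp (-I * γ k * t) - 1) / γ k ^ 2 * cexp (I * z * t))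
      (Ioi 0) :=
  integrable_tsum_of_norm_le_mul (fun _ => by fun_prop) hsum (integrableOn_screw_bound hθ hz)
    (ae_norm_screw_term_le hγθ)

lemma integral_tsum_screw_term (hθ : 0 ≤ θ) (hz : θ < z.im) (hγ : ∀ k, γ k ≠ 0)
    (hγθ : ∀ k, (γ k).im ≤ θ) (hsum : Summable fun k => 1 / ‖γ k‖ ^ 2) :
    ∫ t in Ioi (0 : ℝ), ∑' k, (cexp (-I * γ k * t) - 1) / γ k ^ 2 * cexp (I * z * t)
      = I / z ^ 2 * ∑' k, (1 / (z - γ k) + 1 / γ k) := by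
  rw [← (hasSum_integral_of_norm_le_mul (fun _ => by fun_prop) hsum
    (integrableOn_screw_bound hθ hz) (ae_norm_screw_term_le hγθ)).tsum_eq, ← tsum_mul_left]
  refine tsum_congr fun k => integral_screw_term (hγ k) (hθ.trans_lt hz) ?_
  rw [sub_im]
  linarith [hγθ k]

end ScrewSeries

/-- For every complex `z` with `Im z > θ`,
`∫₀^∞ g(t) e^{izt} dt = (1/z²)[ iB + i m₀/z + i Σₖ (1/(z − γₖ) + 1/γₖ) ]`,
the series on the right-hand side converging absolutely, where
`g(t) = −iBt − (m₀/2)t² + Σₖ (e^{−iγₖ t} − 1)/γₖ²`. -/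
theorem integral_screw_function {I : Type*} [Countable I] (B θ : ℝ) (m₀ : ℕ) (γ : I → ℂ)
    (hθ : 0 ≤ θ) (hγ : ∀ k, γ k ≠ 0)
    (hsum : Summable fun k => 1 / ‖γ k‖ ^ 2)
    (him : ∀ k, |(γ k).im| ≤ θ) :
    ∀ z : ℂ, θ < z.im →
      (Summable fun k => ‖1 / (z - γ k) + 1 / γ k‖) ∧
      (∫ t in Set.Ioi (0 : ℝ),
          (-Complex.I * (B : ℂ) * (t : ℂ) - (m₀ : ℂ) / 2 * (t : ℂ) ^ 2
              + ∑' k, (Complex.exp (-Complex.I * γ k * t) - 1) / (γ k) ^ 2) *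
            Complex.exp (Complex.I * z * t))
        = 1 / z ^ 2 *
            (Complex.I * (B : ℂ) + Complex.I * (m₀ : ℂ) / z
              + Complex.I * ∑' k, (1 / (z - γ k) + 1 / γ k)) := by
  intro z hz
  have hy : 0 < z.im := hθ.trans_lt hz
  have hγθ k : (γ k).im ≤ θ := (abs_le.1 (him k)).2
  have hzγ k : z.im - θ ≤ ‖z - γ k‖ :=
    calc z.im - θ ≤ (z - γ k).im := by rw [sub_im]; linarith [hγθ k]
      _ ≤ ‖z - γ k‖ := (le_abs_self _).trans (abs_im_le_norm _)
  refine ⟨summable_norm_one_div_sub_add_one_div (sub_pos.2 hz) hzγ hγ hsum, ?_⟩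
  have hsplit (t : ℝ) : (-Complex.I * B * t - m₀ / 2 * (t : ℂ) ^ 2
      + ∑' k, (cexp (-Complex.I * γ k * t) - 1) / γ k ^ 2) * cexp (Complex.I * z * t)
      = (-Complex.I * B * t + -(m₀ / 2 : ℂ) * (t : ℂ) ^ 2) * cexp (Complex.I * z * t)
        + ∑' k, (cexp (-Complex.I * γ k * t) - 1) / γ k ^ 2 * cexp (Complex.I * z * t) := by
    rw [add_mul, ← tsum_mul_right]
    ring
  simp_rw [hsplit]
  rw [integral_add (integrableOn_mul_add_mul_sq_mul_cexp_I_mul_Ioi _ _ hy)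
      (integrableOn_tsum_screw_term hθ hz hγθ hsum),
    integral_mul_add_mul_sq_mul_cexp_I_mul_Ioi _ _ hy, integral_tsum_screw_term hθ hz hγ hγθ hsum]
  ring
end

section
/- Let ξ : ℂ → ℂ, A and B complex numbers, m₀ a natural number, and (γₖ)_{k∈I} a countable family of nonzero complex numbers with (1/|γₖ|²)_{k∈I} summable, such that for every complex z the product representation ξ(1/2 − iz) = e^{A + Bz} z^{m₀} Πₖ (1 − z/γₖ) e^{z/γₖ} holds (the family ((1 − z/γₖ) e^{z/γₖ})_{k∈I} being multipliable for every z), and suppose ξ is differentiable at 1/2 − iz₀ for a complex number z₀ that is not equal to 0 or to any γₖ. Then ξ(1/2 − iz₀) ≠ 0 and (ξ'/ξ)(1/2 − iz₀) = iB + i m₀/z₀ + i Σₖ (1/(z₀ − γₖ) + 1/γₖ), the series converging absolutely. -/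
/-!
For `‖u‖ ≤ 1` the genus-one factor satisfies `‖(1 - u) eᵘ - 1‖ ≤ 3‖u‖²`, so summability of
`1/|γₖ|²` makes `∏ₖ (1 - z/γₖ) e^{z/γₖ}` converge locally uniformly; its value vanishes only at
the `γₖ`. Logarithmic derivatives pass to locally uniform limits of holomorphic functions, so the
logarithmic derivative of the product is the (automatically convergent) sum of those of the
factors, `1/(z - γₖ) + 1/γₖ`. The chain rule for `w = 1/2 - iz` contributes the factor `i`.
-/

open Complex Filter Metric

lemma norm_one_sub_mul_exp_sub_one_le {u : ℂ} (hu : ‖u‖ ≤ 1) :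
    ‖(1 - u) * cexp u - 1‖ ≤ 3 * ‖u‖ ^ 2 := by
  have hexp := norm_exp_sub_one_sub_id_le hu
  have h1u : ‖1 - u‖ ≤ 2 := (norm_sub_le 1 u).trans (by rw [norm_one]; linarith)
  calc ‖(1 - u) * cexp u - 1‖ = ‖(1 - u) * (cexp u - 1 - u) - u ^ 2‖ := by ring_nf
    _ ≤ ‖1 - u‖ * ‖cexp u - 1 - u‖ + ‖u‖ ^ 2 := by
      grw [norm_sub_le, norm_mul, norm_pow]
    _ ≤ 2 * ‖u‖ ^ 2 + ‖u‖ ^ 2 := by gcongr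
    _ = 3 * ‖u‖ ^ 2 := by ring

lemma one_sub_div_mul_exp_div_ne_zero {a z : ℂ} (hz : z ≠ a) : (1 - z / a) * cexp (z / a) ≠ 0 :=
  mul_ne_zero (sub_ne_zero.mpr fun h ↦ hz (eq_of_div_eq_one h.symm)) (exp_ne_zero _)

lemma logDeriv_one_sub_div_mul_exp_div {a z : ℂ} (ha : a ≠ 0) (hz : z ≠ a) :
    logDeriv (fun z ↦ (1 - z / a) * cexp (z / a)) z = 1 / (z - a) + 1 / a := by
  have hderiv : HasDerivAt (fun z ↦ (1 - z / a) * cexp (z / a))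
      (-(1 / a) * cexp (z / a) + (1 - z / a) * (cexp (z / a) * (1 / a))) z := by
    have hdiv : HasDerivAt (fun z ↦ z / a) (1 / a) z := by
      simpa using (hasDerivAt_id z).div_const a
    exact (hdiv.const_sub 1).mul hdiv.cexp
  have hza : z - a ≠ 0 := sub_ne_zero.mpr hz
  rw [logDeriv_apply, hderiv.deriv]
  field_simp
  ring

/-- Unlike in `logDeriv_tprod_eq_tsum`, summability of the logarithmic derivatives is a
conclusion here, not a hypothesis. -/
lemma hasSum_logDeriv_of_hasProdLocallyUniformlyOn {ι : Type*} {s : Set ℂ} (hs : IsOpen s)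
    {x : ℂ} (hx : x ∈ s) {f : ι → ℂ → ℂ} {g : ℂ → ℂ} (hf : ∀ i, f i x ≠ 0)
    (hd : ∀ i, DifferentiableOn ℂ (f i) s) (hg : HasProdLocallyUniformlyOn f g s)
    (hgx : g x ≠ 0) :
    HasSum (fun i ↦ logDeriv (f i) x) (logDeriv g x) := by
  refine (logDeriv_tendsto hs hx hg (.of_forall fun t ↦ ?_) hgx).congr fun t ↦ ?_
  · simpa [Finset.prod_fn] using DifferentiableOn.finsetProd fun i _ ↦ hd i
  · exact logDeriv_prod (fun i _ ↦ hf i) fun i _ ↦ (hd i).differentiableAt (hs.mem_nhds hx)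

section GenusOneProduct

variable {I : Type*} {γ : I → ℂ}

lemma eventually_norm_one_sub_div_mul_exp_div_sub_one_le
    (hsum : Summable fun k ↦ 1 / ‖γ k‖ ^ 2) (R : ℝ) :
    ∀ᶠ k in cofinite, ∀ z ∈ ball (0 : ℂ) R,
      ‖(1 - z / γ k) * cexp (z / γ k) - 1‖ ≤ 3 * R ^ 2 * (1 / ‖γ k‖ ^ 2) := by
  have hsmall := ((hsum.mul_left (R ^ 2)).tendsto_cofinite_zero).eventually_le_const one_pos
  filter_upwards [hsmall] with k hk z hz
  rw [mem_ball_zero_iff] at hz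
  have hzγ : ‖z / γ k‖ ^ 2 ≤ R ^ 2 * (1 / ‖γ k‖ ^ 2) := by
    rw [norm_div, div_pow, div_eq_mul_one_div]
    gcongr
  calc ‖(1 - z / γ k) * cexp (z / γ k) - 1‖ ≤ 3 * ‖z / γ k‖ ^ 2 :=
        norm_one_sub_mul_exp_sub_one_le ((sq_le_one_iff₀ (norm_nonneg _)).mp (hzγ.trans hk))
    _ ≤ 3 * R ^ 2 * (1 / ‖γ k‖ ^ 2) := by rw [mul_assoc]; gcongr

lemma hasProdLocallyUniformlyOn_one_sub_div_mul_exp_div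
    (hsum : Summable fun k ↦ 1 / ‖γ k‖ ^ 2) (R : ℝ) :
    HasProdLocallyUniformlyOn (fun k z ↦ (1 - z / γ k) * cexp (z / γ k))
      (fun z ↦ ∏' k, (1 - z / γ k) * cexp (z / γ k)) (ball 0 R) := by
  simpa using Summable.hasProdLocallyUniformlyOn_one_add isOpen_ball
    (hsum.mul_left (3 * R ^ 2)) (eventually_norm_one_sub_div_mul_exp_div_sub_one_le hsum R)
    fun k ↦ by fun_prop

lemma differentiable_tprod_one_sub_div_mul_exp_div (hsum : Summable fun k ↦ 1 / ‖γ k‖ ^ 2) :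
    Differentiable ℂ fun z ↦ ∏' k, (1 - z / γ k) * cexp (z / γ k) := fun z ↦
  ((hasProdLocallyUniformlyOn_one_sub_div_mul_exp_div hsum (‖z‖ + 1)).differentiableOn
    (.of_forall fun t ↦ by fun_prop) isOpen_ball).differentiableAt
    (isOpen_ball.mem_nhds (by simp))

lemma tprod_one_sub_div_mul_exp_div_ne_zero (hsum : Summable fun k ↦ 1 / ‖γ k‖ ^ 2) {z : ℂ}
    (hz : ∀ k, z ≠ γ k) : ∏' k, (1 - z / γ k) * cexp (z / γ k) ≠ 0 := by
  have hsummable : Summable fun k ↦ ‖(1 - z / γ k) * cexp (z / γ k) - 1‖ := by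
    refine .of_norm_bounded_eventually (hsum.mul_left (3 * (‖z‖ + 1) ^ 2)) ?_
    filter_upwards [eventually_norm_one_sub_div_mul_exp_div_sub_one_le hsum (‖z‖ + 1)] with k hk
    simpa using hk z (by simp)
  simpa using tprod_one_add_ne_zero_of_summable
    (by simpa using fun k ↦ one_sub_div_mul_exp_div_ne_zero (hz k)) hsummable

lemma hasSum_logDeriv_tprod_one_sub_div_mul_exp_div (hγ : ∀ k, γ k ≠ 0)
    (hsum : Summable fun k ↦ 1 / ‖γ k‖ ^ 2) {z : ℂ} (hz : ∀ k, z ≠ γ k) :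
    HasSum (fun k ↦ 1 / (z - γ k) + 1 / γ k)
      (logDeriv (fun z ↦ ∏' k, (1 - z / γ k) * cexp (z / γ k)) z) := by
  have h := hasSum_logDeriv_of_hasProdLocallyUniformlyOn
    (f := fun k z ↦ (1 - z / γ k) * cexp (z / γ k))
    (g := fun z ↦ ∏' k, (1 - z / γ k) * cexp (z / γ k)) isOpen_ball
    (by simp : z ∈ ball (0 : ℂ) (‖z‖ + 1))
    (fun k ↦ one_sub_div_mul_exp_div_ne_zero (hz k)) (fun k ↦ by fun_prop)
    (hasProdLocallyUniformlyOn_one_sub_div_mul_exp_div hsum _)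
    (tprod_one_sub_div_mul_exp_div_ne_zero hsum hz)
  simpa only [logDeriv_one_sub_div_mul_exp_div (hγ _) (hz _)] using h

end GenusOneProduct

lemma logDeriv_exp_mul_pow_mul {f : ℂ → ℂ} {A B z : ℂ} (m : ℕ) (hz : z ≠ 0) (hfz : f z ≠ 0)
    (hf : DifferentiableAt ℂ f z) :
    logDeriv (fun z ↦ cexp (A + B * z) * z ^ m * f z) z = B + m / z + logDeriv f z := by
  have hexp : logDeriv (fun z ↦ cexp (A + B * z)) z = B := by
    rw [logDeriv_apply, ((((hasDerivAt_id' z).const_mul B).const_add A).cexp).deriv]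
    field_simp [exp_ne_zero]
  rw [logDeriv_mul (f := fun z ↦ cexp (A + B * z) * z ^ m) z
      (mul_ne_zero (exp_ne_zero _) (pow_ne_zero _ hz)) hfz (by fun_prop) hf,
    logDeriv_mul (f := fun z ↦ cexp (A + B * z)) (g := (· ^ m)) z (exp_ne_zero _)
      (pow_ne_zero _ hz) (by fun_prop) (by fun_prop),
    hexp, logDeriv_pow]

theorem logDeriv_hadamard_product_general {I : Type*} (ξ : ℂ → ℂ) (A B : ℂ)
    (m₀ : ℕ) (γ : I → ℂ) (hγ : ∀ k, γ k ≠ 0)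
    (hsum : Summable fun k => 1 / ‖γ k‖ ^ 2)
    (hprod : ∀ z : ℂ, ξ (1 / 2 - Complex.I * z)
      = Complex.exp (A + B * z) * z ^ m₀ * ∏' k, (1 - z / γ k) * Complex.exp (z / γ k))
    (z₀ : ℂ) (hz₀ : z₀ ≠ 0) (hz₀' : ∀ k, z₀ ≠ γ k) :
    ξ (1 / 2 - Complex.I * z₀) ≠ 0 ∧
    (Summable fun k => ‖1 / (z₀ - γ k) + 1 / γ k‖) ∧
    deriv ξ (1 / 2 - Complex.I * z₀) / ξ (1 / 2 - Complex.I * z₀)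
      = Complex.I * B + Complex.I * (m₀ : ℂ) / z₀
          + Complex.I * ∑' k, (1 / (z₀ - γ k) + 1 / γ k) := by
  set P : ℂ → ℂ := fun z ↦ ∏' k, (1 - z / γ k) * cexp (z / γ k)
  have hP : Differentiable ℂ P := differentiable_tprod_one_sub_div_mul_exp_div hsum
  have hPz₀ : P z₀ ≠ 0 := tprod_one_sub_div_mul_exp_div_ne_zero hsum hz₀'
  have hlogDerivP := hasSum_logDeriv_tprod_one_sub_div_mul_exp_div hγ hsum hz₀'
  have hξ : ξ = (fun z ↦ cexp (A + B * z) * z ^ m₀ * P z) ∘ fun w ↦ Complex.I * (w - 1 / 2) := by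
    funext w
    rw [Function.comp_apply, ← hprod]
    congr 1
    linear_combination (w - 1 / 2) * Complex.I_sq
  have hz₀w : Complex.I * (1 / 2 - Complex.I * z₀ - 1 / 2) = z₀ := by
    linear_combination -z₀ * Complex.I_sq
  refine ⟨?_, summable_norm_iff.mpr hlogDerivP.summable, ?_⟩
  · rw [hprod]
    exact mul_ne_zero (mul_ne_zero (exp_ne_zero _) (pow_ne_zero _ hz₀)) hPz₀
  calc deriv ξ (1 / 2 - Complex.I * z₀) / ξ (1 / 2 - Complex.I * z₀)
      = logDeriv (fun z ↦ cexp (A + B * z) * z ^ m₀ * P z) z₀ * Complex.I := by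
        rw [← logDeriv_apply, hξ, logDeriv_comp (by rw [hz₀w]; fun_prop) (by fun_prop), hz₀w]
        simp
    _ = _ := by
      rw [logDeriv_exp_mul_pow_mul m₀ hz₀ hPz₀ (hP z₀), hlogDerivP.tsum_eq]
      ring

/-- If `ξ(1/2 − iz) = e^{A+Bz} z^{m₀} Πₖ (1 − z/γₖ) e^{z/γₖ}` for all `z`
(the products being multipliable), and `ξ` is differentiable at `1/2 − iz₀` for some
`z₀` not equal to `0` nor to any `γₖ`, then `ξ(1/2 − iz₀) ≠ 0` and
`(ξ'/ξ)(1/2 − iz₀) = iB + i m₀/z₀ + i Σₖ (1/(z₀ − γₖ) + 1/γₖ)`,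
the series converging absolutely. -/
theorem logDeriv_hadamard_product {I : Type*} [Countable I] (ξ : ℂ → ℂ) (A B : ℂ)
    (m₀ : ℕ) (γ : I → ℂ) (hγ : ∀ k, γ k ≠ 0)
    (hsum : Summable fun k => 1 / ‖γ k‖ ^ 2)
    (hmul : ∀ z : ℂ, Multipliable fun k => (1 - z / γ k) * Complex.exp (z / γ k))
    (hprod : ∀ z : ℂ, ξ (1 / 2 - Complex.I * z)
      = Complex.exp (A + B * z) * z ^ m₀ * ∏' k, (1 - z / γ k) * Complex.exp (z / γ k))
    (z₀ : ℂ) (hz₀ : z₀ ≠ 0) (hz₀' : ∀ k, z₀ ≠ γ k)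
    (hd : DifferentiableAt ℂ ξ (1 / 2 - Complex.I * z₀)) :
    ξ (1 / 2 - Complex.I * z₀) ≠ 0 ∧
    (Summable fun k => ‖1 / (z₀ - γ k) + 1 / γ k‖) ∧
    deriv ξ (1 / 2 - Complex.I * z₀) / ξ (1 / 2 - Complex.I * z₀)
      = Complex.I * B + Complex.I * (m₀ : ℂ) / z₀
          + Complex.I * ∑' k, (1 / (z₀ - γ k) + 1 / γ k) :=
  logDeriv_hadamard_product_general ξ A B m₀ γ hγ hsum hprod z₀ hz₀ hz₀'
end

section
/- Suppose B = 0 and there exists a bijection σ : I → I such that γ_{σ(k)} = −conj(γₖ) for every k ∈ I. Then the screw function g is real-valued: g(t) ∈ ℝ for every t ≥ 0. -/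
/-- If `B = 0` and there is a bijection `σ : I → I` with
`γ (σ k) = −conj (γ k)` for every `k`, then the screw function
`g(t) = −iBt − (m₀/2)t² + Σₖ (e^{−iγₖt} − 1)/γₖ²` is real-valued on `[0,∞)`. -/
theorem screw_function_real_valued {I : Type*} [Countable I] (B θ : ℝ) (m₀ : ℕ)
    (γ : I → ℂ) (hθ : 0 ≤ θ) (hγ : ∀ k, γ k ≠ 0)
    (hsum : Summable fun k => 1 / ‖γ k‖ ^ 2)
    (him : ∀ k, |(γ k).im| ≤ θ)
    (hB : B = 0) (σ : I ≃ I) (hσ : ∀ k, γ (σ k) = -(starRingEnd ℂ) (γ k)) :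
    ∀ t : ℝ, 0 ≤ t →
      (-Complex.I * (B : ℂ) * (t : ℂ) - (m₀ : ℂ) / 2 * (t : ℂ) ^ 2
          + ∑' k, (Complex.exp (-Complex.I * γ k * t) - 1) / (γ k) ^ 2).im = 0 := by
  intro t ht
  subst hB
  set f : I → ℂ := fun k => (Complex.exp (-Complex.I * γ k * t) - 1) / (γ k) ^ 2 with hf
  have hconj : ∀ k, (starRingEnd ℂ) (f k) = f (σ k) := by
    intro k
    simp only [hf, hσ, map_div₀, map_sub, map_one, map_pow, neg_neg,
      even_two, Even.neg_pow]
    congr 1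
    rw [← Complex.exp_conj]
    congr 1
    simp only [map_mul, map_neg, Complex.conj_I, Complex.conj_ofReal]
    ring
  have hS : (starRingEnd ℂ) (∑' k, f k) = ∑' k, f k := by
    calc (starRingEnd ℂ) (∑' k, f k) = ∑' k, (starRingEnd ℂ) (f k) := by
          exact tsum_star
      _ = ∑' k, f (σ k) := by simp_rw [hconj]
      _ = ∑' k, f k := σ.tsum_eq f
  have him0 : (∑' k, f k).im = 0 := by
    have := congrArg Complex.im hS
    simpa [Complex.conj_im] using (by linarith [congrArg Complex.im hS, Complex.conj_im (∑' k, f k)] : (∑' k, f k).im = 0)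
  simp [him0, ← Complex.ofReal_pow]
end

section
/- Suppose every γₖ is real. Then the family (1/(γₖ(1 + γₖ²)))_{k∈I} is summable, and setting C := −B − Σₖ 1/(γₖ(1 + γₖ²)), for every t ≥ 0 one has g(t) = iCt − (m₀/2) t² + Σₖ (e^{−iγₖ t} − 1 + iγₖ t/(1 + γₖ²))/γₖ², where the last series converges absolutely. -/
/-! For real `γ` one has `|e^{-iγt} - 1| ≤ 2` and `|γ / (1 + γ²)| ≤ 1`, so every series in sight
is dominated by a multiple of `Σ 1/|γₖ|²`. Since `γ / (1 + γ²) / γ² = 1 / (γ(1 + γ²))`, the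
compensating terms `iγₖt / ((1 + γₖ²)γₖ²)` sum to `it Σ 1/(γₖ(1 + γₖ²))`, which is absorbed into
the linear term. -/

open Complex

-- Both sides are `0` when `z = 0` or `1 + z ^ 2 = 0`, so no side condition is needed.
theorem div_one_add_sq_div_sq {K : Type*} [Field K] (z : K) :
    z / (1 + z ^ 2) / z ^ 2 = 1 / (z * (1 + z ^ 2)) := by
  rcases eq_or_ne z 0 with rfl | hz
  · simp
  · rw [div_div, mul_comm, sq, mul_assoc, div_mul_cancel_left₀ hz, one_div]

theorem abs_div_one_add_sq_le_one (x : ℝ) : |x| / (1 + x ^ 2) ≤ 1 := by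
  rw [div_le_one (by positivity)]
  nlinarith [sq_abs x, abs_nonneg x]

theorem norm_ofReal_div_one_add_sq_le_one (x : ℝ) : ‖(x : ℂ) / (1 + (x : ℂ) ^ 2)‖ ≤ 1 := by
  rw [← ofReal_one, ← ofReal_pow, ← ofReal_add, ← ofReal_div, norm_real, Real.norm_eq_abs,
    abs_div, abs_of_pos (by positivity : (0 : ℝ) < 1 + x ^ 2)]
  exact abs_div_one_add_sq_le_one x

theorem norm_I_mul_ofReal_mul_div_one_add_sq_le (x t : ℝ) :
    ‖I * x * t / (1 + (x : ℂ) ^ 2)‖ ≤ |t| := by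
  rw [mul_right_comm, mul_div_assoc, norm_mul, norm_mul, norm_I, one_mul, norm_real,
    Real.norm_eq_abs]
  exact mul_le_of_le_one_right (abs_nonneg t) (norm_ofReal_div_one_add_sq_le_one x)

theorem norm_exp_neg_I_mul_ofReal_sub_one_le (x t : ℝ) : ‖exp (-I * x * t) - 1‖ ≤ 2 := by
  calc ‖exp (-I * x * t) - 1‖ ≤ ‖exp (-I * x * t)‖ + ‖(1 : ℂ)‖ := norm_sub_le _ _
    _ = 2 := by simp [norm_exp]; norm_num

theorem summable_norm_div_sq_of_norm_le {𝕜 ι : Type*} [NormedField 𝕜] {γ f : ι → 𝕜} {C : ℝ}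
    (hγ : Summable fun k => 1 / ‖γ k‖ ^ 2) (hf : ∀ k, ‖f k‖ ≤ C) :
    Summable fun k => ‖f k / γ k ^ 2‖ := by
  refine (hγ.mul_left C).of_nonneg_of_le (fun k => norm_nonneg _) fun k => ?_
  rw [norm_div, norm_pow, div_eq_mul_one_div]
  exact mul_le_mul_of_nonneg_right (hf k) (by positivity)

theorem screw_canonical_representation_general {I : Type*} (B : ℝ) (m₀ : ℕ)
    (γ : I → ℂ)
    (hsum : Summable fun k => 1 / ‖γ k‖ ^ 2)
    (hreal : ∀ k, (γ k).im = 0) :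
    (Summable fun k => 1 / (γ k * (1 + (γ k) ^ 2))) ∧
    ∀ t : ℝ, 0 ≤ t →
      (Summable fun k =>
        ‖(Complex.exp (-Complex.I * γ k * t) - 1
            + Complex.I * γ k * t / (1 + (γ k) ^ 2)) / (γ k) ^ 2‖) ∧
      -Complex.I * (B : ℂ) * (t : ℂ) - (m₀ : ℂ) / 2 * (t : ℂ) ^ 2
          + ∑' k, (Complex.exp (-Complex.I * γ k * t) - 1) / (γ k) ^ 2
        = Complex.I * (-(B : ℂ) - ∑' k, 1 / (γ k * (1 + (γ k) ^ 2))) * (t : ℂ)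
            - (m₀ : ℂ) / 2 * (t : ℂ) ^ 2
            + ∑' k, (Complex.exp (-Complex.I * γ k * t) - 1
                + Complex.I * γ k * t / (1 + (γ k) ^ 2)) / (γ k) ^ 2 := by
  obtain ⟨x, rfl⟩ : ∃ x : I → ℝ, γ = fun k => (x k : ℂ) :=
    ⟨fun k => (γ k).re, funext fun k => Complex.ext rfl (hreal k)⟩
  beta_reduce at hsum ⊢
  have hlinear : Summable fun k => 1 / ((x k : ℂ) * (1 + (x k : ℂ) ^ 2)) := by
    simpa only [div_one_add_sq_div_sq] using
      (summable_norm_div_sq_of_norm_le hsum fun k =>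
        norm_ofReal_div_one_add_sq_le_one (x k)).of_norm
  refine ⟨hlinear, fun t _ =>
    ⟨summable_norm_div_sq_of_norm_le (C := 2 + |t|) hsum fun k => ?_, ?_⟩⟩
  · exact (norm_add_le _ _).trans (add_le_add (norm_exp_neg_I_mul_ofReal_sub_one_le (x k) t)
      (norm_I_mul_ofReal_mul_div_one_add_sq_le (x k) t))
  have hexp : Summable fun k => (Complex.exp (-Complex.I * x k * t) - 1) / (x k : ℂ) ^ 2 :=
    (summable_norm_div_sq_of_norm_le hsum fun k =>
      norm_exp_neg_I_mul_ofReal_sub_one_le (x k) t).of_norm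
  have hsplit : ∀ k, (Complex.exp (-Complex.I * x k * t) - 1
        + Complex.I * x k * t / (1 + (x k : ℂ) ^ 2)) / (x k : ℂ) ^ 2
      = (Complex.exp (-Complex.I * x k * t) - 1) / (x k : ℂ) ^ 2
        + Complex.I * t * (1 / ((x k : ℂ) * (1 + (x k : ℂ) ^ 2))) := fun k => by
    rw [add_div, ← div_one_add_sq_div_sq]
    ring
  rw [tsum_congr hsplit, hexp.tsum_add (hlinear.mul_left _), tsum_mul_left]
  ring

/-- If every `γₖ` is real, then `(1/(γₖ(1 + γₖ²)))ₖ` is summable and,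
with `C := −B − Σₖ 1/(γₖ(1 + γₖ²))`, the screw function
`g(t) = −iBt − (m₀/2)t² + Σₖ (e^{−iγₖt} − 1)/γₖ²` has, for every `t ≥ 0`, the
canonical representation
`g(t) = iCt − (m₀/2)t² + Σₖ (e^{−iγₖt} − 1 + iγₖt/(1 + γₖ²))/γₖ²`,
the last series converging absolutely. -/
theorem screw_canonical_representation {I : Type*} [Countable I] (B θ : ℝ) (m₀ : ℕ)
    (γ : I → ℂ) (hθ : 0 ≤ θ) (hγ : ∀ k, γ k ≠ 0)
    (hsum : Summable fun k => 1 / ‖γ k‖ ^ 2)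
    (him : ∀ k, |(γ k).im| ≤ θ)
    (hreal : ∀ k, (γ k).im = 0) :
    (Summable fun k => 1 / (γ k * (1 + (γ k) ^ 2))) ∧
    ∀ t : ℝ, 0 ≤ t →
      (Summable fun k =>
        ‖(Complex.exp (-Complex.I * γ k * t) - 1
            + Complex.I * γ k * t / (1 + (γ k) ^ 2)) / (γ k) ^ 2‖) ∧
      -Complex.I * (B : ℂ) * (t : ℂ) - (m₀ : ℂ) / 2 * (t : ℂ) ^ 2
          + ∑' k, (Complex.exp (-Complex.I * γ k * t) - 1) / (γ k) ^ 2
        = Complex.I * (-(B : ℂ) - ∑' k, 1 / (γ k * (1 + (γ k) ^ 2))) * (t : ℂ)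
            - (m₀ : ℂ) / 2 * (t : ℂ) ^ 2
            + ∑' k, (Complex.exp (-Complex.I * γ k * t) - 1
                + Complex.I * γ k * t / (1 + (γ k) ^ 2)) / (γ k) ^ 2 :=
  screw_canonical_representation_general B m₀ γ hsum hreal
end
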